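/- arXiv:2508.10513 — 2 statements merged into one kernel-verified Lean document; each statement's English description precedes it below -/
import Mathlib

section
/- On SO(3), for ξ ∈ ℝ³ with φ = ‖ξ‖ not a nonzero multiple of 2π, the matrices dexp_ξ = I + (β/2)ξ̃ + ((1−α)/φ²)ξ̃² and D_ξ = I − ½ξ̃ + ((1−γ)/φ²)ξ̃², with α = sinc φ, β = sinc²(φ/2), γ = α/β, are mutually inverse: dexp_ξ · D_ξ = I. -/
open Matrix

/-- The skew-symmetric matrix `ξ̃` associated with `ξ ∈ ℝ³`. -/
def skew (ξ : Fin 3 → ℝ) : Matrix (Fin 3) (Fin 3) ℝ :=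
  !![0, -ξ 2, ξ 1; ξ 2, 0, -ξ 0; -ξ 1, ξ 0, 0]

/-- `sinc x = sin x / x` for `x ≠ 0`, and `sinc 0 = 1`. -/
noncomputable def sinc (x : ℝ) : ℝ := if x = 0 then 1 else Real.sin x / x

/-!
Since `ξ̃³ = -φ² ξ̃`, the matrices `1 + a ξ̃ + b ξ̃²` form a commutative algebra in which products
are computed on the coefficients `(a, b)`. Writing `s = sinc (φ/2)` and `c = cos (φ/2)`, one has
`α = s c`, `β = s²` and `γ = c / s`, and the two coefficients of `dexp_ξ · D_ξ - 1` reduce to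
`β γ - α = 0` and `(1 - α γ) / φ² - β / 4 = (1 - c² - sin² (φ/2)) / φ² = 0`.
-/

lemma sinc_mul_self (x : ℝ) : sinc x * x = Real.sin x := by
  by_cases hx : x = 0
  · simp [hx]
  · rw [sinc, if_neg hx, div_mul_cancel₀ _ hx]

lemma sinc_eq_sinc_half_mul_cos_half (x : ℝ) : sinc x = sinc (x / 2) * Real.cos (x / 2) := by
  by_cases hx : x = 0
  · simp [hx, sinc]
  · have hx2 : x / 2 ≠ 0 := by positivity
    have hsin : Real.sin x = 2 * Real.sin (x / 2) * Real.cos (x / 2) := by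
      rw [← Real.sin_two_mul]; ring_nf
    rw [sinc, if_neg hx, sinc, if_neg hx2, hsin]
    field_simp

lemma sinc_half_ne_zero_of_ne_two_pi_mul {φ : ℝ} (hφ : φ ≠ 0)
    (hmult : ¬∃ k : ℤ, k ≠ 0 ∧ φ = 2 * Real.pi * k) : sinc (φ / 2) ≠ 0 := by
  have hφ2 : φ / 2 ≠ 0 := by positivity
  rw [sinc, if_neg hφ2]
  refine div_ne_zero (fun hsin => hmult ?_) hφ2
  obtain ⟨k, hk⟩ := Real.sin_eq_zero_iff.mp hsin
  refine ⟨k, fun hk0 => hφ ?_, by linear_combination -2 * hk⟩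
  simp only [hk0, Int.cast_zero, zero_mul] at hk
  linarith

lemma one_add_smul_add_smul_sq_mul {K A : Type*} [Field K] [Ring A] [Algebra K A] {S : A} {c : K} (hS : S ^ 3 = -c • S) (a b a' b' : K) :
    (1 + a • S + b • S ^ 2) * (1 + a' • S + b' • S ^ 2) =
      1 + (a + a' - c * (a * b' + a' * b)) • S + (b + b' + a * a' - c * b * b') • S ^ 2 := by
  have hS4 : S ^ 4 = -c • S ^ 2 := by
    rw [pow_succ, hS, smul_mul_assoc, ← pow_two]
  have h11 : S * S = S ^ 2 := (sq S).symm
  have h12 : S * S ^ 2 = S ^ 3 := (pow_succ' S 2).symm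
  have h21 : S ^ 2 * S = S ^ 3 := (pow_succ S 2).symm
  have h22 : S ^ 2 * S ^ 2 = S ^ 4 := (pow_add S 2 2).symm
  simp only [mul_add, add_mul, one_mul, mul_one, smul_mul_assoc, mul_smul_comm, smul_smul,
    h11, h12, h21, h22, hS, hS4]
  module

lemma skew_pow_three (ξ : Fin 3 → ℝ) :
    skew ξ ^ 3 = -(ξ 0 ^ 2 + ξ 1 ^ 2 + ξ 2 ^ 2) • skew ξ := by
  ext i j
  fin_cases i <;> fin_cases j <;>
    simp [skew, pow_succ, Matrix.mul_apply, Fin.sum_univ_three] <;> ring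

lemma skew_eq_zero_of_sqrt_eq_zero {ξ : Fin 3 → ℝ}
    (h : Real.sqrt (ξ 0 ^ 2 + ξ 1 ^ 2 + ξ 2 ^ 2) = 0) : skew ξ = 0 := by
  have hsum := (Real.sqrt_eq_zero (by positivity)).mp h
  have h0 : ξ 0 = 0 := by nlinarith [sq_nonneg (ξ 0), sq_nonneg (ξ 1), sq_nonneg (ξ 2)]
  have h1 : ξ 1 = 0 := by nlinarith [sq_nonneg (ξ 0), sq_nonneg (ξ 1), sq_nonneg (ξ 2)]
  have h2 : ξ 2 = 0 := by nlinarith [sq_nonneg (ξ 0), sq_nonneg (ξ 1), sq_nonneg (ξ 2)]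
  ext i j
  fin_cases i <;> fin_cases j <;> simp [skew, h0, h1, h2]

theorem dexp_mul_dexpInv_eq_one {A : Type*} [Ring A] [Algebra ℝ A] {S : A} {φ : ℝ}
    (hS : S ^ 3 = -(φ ^ 2) • S) (hφ : φ ≠ 0) (hs : sinc (φ / 2) ≠ 0) :
    (1 + (sinc (φ / 2) ^ 2 / 2) • S + ((1 - sinc φ) / φ ^ 2) • S ^ 2) *
      (1 - (1 / 2 : ℝ) • S + ((1 - sinc φ / sinc (φ / 2) ^ 2) / φ ^ 2) • S ^ 2) = 1 := by
  rw [sub_add_eq_add_sub, ← sub_add_eq_add_sub, sub_eq_add_neg (1 : A), ← neg_smul,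
    one_add_smul_add_smul_sq_mul hS, sinc_eq_sinc_half_mul_cos_half φ]
  have hpyth := Real.sin_sq_add_cos_sq (φ / 2)
  rw [← sinc_mul_self (φ / 2)] at hpyth
  set s := sinc (φ / 2)
  set c := Real.cos (φ / 2)
  have hcoeff₁ : s ^ 2 / 2 + -(1 / 2)
      - φ ^ 2 * (s ^ 2 / 2 * ((1 - s * c / s ^ 2) / φ ^ 2) + -(1 / 2) * ((1 - s * c) / φ ^ 2)) = 0 := by
    field_simp
    ring
  have hcoeff₂ : (1 - s * c) / φ ^ 2 + (1 - s * c / s ^ 2) / φ ^ 2 + s ^ 2 / 2 * -(1 / 2)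
      - φ ^ 2 * ((1 - s * c) / φ ^ 2) * ((1 - s * c / s ^ 2) / φ ^ 2) = 0 := by
    field_simp
    linear_combination -4 * s * hpyth
  rw [hcoeff₁, hcoeff₂, zero_smul, zero_smul, add_zero, add_zero]

/-- On `SO(3)`, for `φ = ‖ξ‖` not a nonzero multiple of `2π`, the closed forms
`dexp_ξ = I + (β/2)ξ̃ + ((1−α)/φ²)ξ̃²` and `D_ξ = I − ½ξ̃ + ((1−γ)/φ²)ξ̃²`
(with `α = sinc φ`, `β = sinc²(φ/2)`, `γ = α/β`) are mutually inverse. -/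
theorem stmt6 (ξ : Fin 3 → ℝ) (φ α β γ : ℝ)
    (hφ : φ = Real.sqrt (ξ 0 ^ 2 + ξ 1 ^ 2 + ξ 2 ^ 2))
    (hmult : ¬∃ k : ℤ, k ≠ 0 ∧ φ = 2 * Real.pi * k)
    (hα : α = sinc φ) (hβ : β = sinc (φ / 2) ^ 2) (hγ : γ = α / β)
    (dexpM D : Matrix (Fin 3) (Fin 3) ℝ)
    (hdexp : dexpM = 1 + (β / 2) • skew ξ + ((1 - α) / φ ^ 2) • (skew ξ) ^ 2)
    (hD : D = 1 - (1 / 2 : ℝ) • skew ξ + ((1 - γ) / φ ^ 2) • (skew ξ) ^ 2) :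
    dexpM * D = 1 := by
  subst hdexp hD hγ hα hβ
  by_cases hφ0 : φ = 0
  · simp [skew_eq_zero_of_sqrt_eq_zero (hφ ▸ hφ0)]
  · have hS : skew ξ ^ 3 = -(φ ^ 2) • skew ξ := by
      rw [skew_pow_three, hφ, Real.sq_sqrt (by positivity)]
    exact dexp_mul_dexpInv_eq_one hS hφ0 (sinc_half_ne_zero_of_ne_two_pi_mul hφ0 hmult)
end

section
/- For R ∈ SO(3) with tr(R) ≠ −1 and R ≠ I, setting φ = arccos((tr R − 1)/2) ∈ (0, π), the matrix X = (φ/(2 sin φ))(R − Rᵀ) is skew-symmetric and satisfies exp(X) = R. -/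
/-!
For a rotation `R` with trace `t`, the 3 × 3 Cayley–Hamilton identity together with `adj R = Rᵀ`
gives `R² = t R − t + Rᵀ`. Hence the skew part `A = R − Rᵀ` satisfies
`A² = (t + 1)(R + Rᵀ) − 2(t + 1)` and `A³ = −(t + 1)(3 − t) A`. As `4 sin² φ = (t + 1)(3 − t)`,
`K = A / (2 sin φ)` satisfies `K³ = −K`; splitting the exponential series into even and odd terms
then gives Rodrigues' formula `exp (φ K) = 1 + sin φ K + (1 − cos φ) K²`, which the identity for
`A²` turns back into `R`. The bounds `−1 ≤ t < 3` placing `φ` in `(0, π)` come from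
`tr ((R − 1)ᵀ (R − 1)) = 6 − 2t > 0` and `tr (Aᵀ A) = 2 (t + 1)(3 − t) ≥ 0`.
-/

open Matrix

theorem Real.four_mul_sin_sq_of_cos_eq {φ t : ℝ} (hcos : Real.cos φ = (t - 1) / 2) :
    4 * Real.sin φ ^ 2 = (t + 1) * (3 - t) := by
  have h := Real.sin_sq_add_cos_sq φ
  rw [hcos] at h
  linear_combination 4 * h

section Rodrigues

variable {A : Type*} [Ring A] [Algebra ℝ A]

theorem pow_two_mul_add_one_of_mul_mul_self_eq_neg {K : A} (hK : K * K * K = -K) (m : ℕ) :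
    K ^ (2 * m + 1) = (-1 : ℝ) ^ m • K := by
  induction m with
  | zero => simp
  | succ m ih =>
    rw [show 2 * (m + 1) + 1 = 2 * m + 1 + 1 + 1 by ring, pow_succ, pow_succ, ih,
      smul_mul_assoc, smul_mul_assoc, hK, pow_succ, mul_neg_one, neg_smul, smul_neg]

variable [TopologicalSpace A] [IsTopologicalRing A] [ContinuousSMul ℝ A] [T2Space A]

theorem exp_smul_of_mul_mul_self_eq_neg {K : A} (hK : K * K * K = -K) (φ : ℝ) :
    NormedSpace.exp (φ • K) = 1 + Real.sin φ • K + (1 - Real.cos φ) • (K * K) := by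
  have hodd (m : ℕ) : K ^ (2 * m + 1) = (-1 : ℝ) ^ m • K :=
    pow_two_mul_add_one_of_mul_mul_self_eq_neg hK m
  have heven (m : ℕ) : K ^ (2 * (m + 1)) = (-1 : ℝ) ^ m • (K * K) := by
    rw [show 2 * (m + 1) = 2 * m + 1 + 1 by ring, pow_succ, hodd, smul_mul_assoc]
  have hsin : HasSum (fun m => ((2 * m + 1).factorial⁻¹ : ℝ) • (φ • K) ^ (2 * m + 1))
      (Real.sin φ • K) := by
    refine ((Real.hasSum_sin φ).smul_const K).congr_fun fun m => ?_
    rw [smul_pow, hodd, smul_smul, smul_smul]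
    ring_nf
  have hcos : HasSum (fun m => ((2 * (m + 1)).factorial⁻¹ : ℝ) • (φ • K) ^ (2 * (m + 1)))
      ((1 - Real.cos φ) • (K * K)) := by
    convert ((hasSum_nat_add_iff' 1).mpr (Real.hasSum_cos φ)).neg.smul_const (K * K) using 1
    · funext m
      rw [smul_pow, heven, smul_smul, smul_smul, pow_succ]
      ring_nf
    · simp
  have hexp := HasSum.even_add_odd (f := fun n => (n.factorial⁻¹ : ℝ) • (φ • K) ^ n)
    ((hasSum_nat_add_iff 1).mp hcos) hsin
  rw [NormedSpace.exp_eq_tsum ℝ]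
  beta_reduce
  rw [hexp.tsum_eq]
  simp only [Finset.range_one, Finset.sum_singleton, Nat.mul_zero, Nat.factorial_zero, Nat.cast_one,
    inv_one, pow_zero, one_smul]
  abel

end Rodrigues

namespace Matrix

theorem adjugate_fin_three_eq_mul_self_sub_trace_smul {α : Type*} [Field α] [CharZero α]
    (M : Matrix (Fin 3) (Fin 3) α) :
    M.adjugate = M * M - M.trace • M + ((M.trace ^ 2 - (M * M).trace) / 2) • 1 := by
  ext i j
  fin_cases i <;> fin_cases j <;>
    simp [adjugate_fin_three, mul_apply, trace_fin_three, Fin.sum_univ_three] <;> ring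

theorem adjugate_eq_transpose_of_transpose_mul_self_eq_one {n α : Type*} [Fintype n]
    [DecidableEq n] [CommRing α] {R : Matrix n n α} (horth : Rᵀ * R = 1) (hdet : R.det = 1) :
    R.adjugate = Rᵀ := by
  calc R.adjugate = R.adjugate * R * Rᵀ := by rw [mul_assoc, mul_eq_one_comm.mp horth, mul_one]
    _ = Rᵀ := by rw [adjugate_mul, hdet, one_smul, one_mul]

theorem trace_lt_card_of_transpose_mul_self_eq_one {n : Type*} [Fintype n] [DecidableEq n]
    {R : Matrix n n ℝ} (horth : Rᵀ * R = 1) (hne : R ≠ 1) : R.trace < Fintype.card n := by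
  have hsq : ((R - 1)ᵀ * (R - 1)).trace = 2 * (Fintype.card n - R.trace) := by
    simp only [transpose_sub, transpose_one, sub_mul, mul_sub, horth, mul_one, one_mul,
      trace_sub, trace_one, trace_transpose]
    ring
  have hpos : ((R - 1)ᵀ * (R - 1)).trace ≠ 0 := by
    rw [← conjTranspose_eq_transpose_of_trivial, Ne, trace_conjTranspose_mul_self_eq_zero_iff]
    exact sub_ne_zero.mpr hne
  have hnonneg := (posSemidef_conjTranspose_mul_self (R - 1)).trace_nonneg
  rw [conjTranspose_eq_transpose_of_trivial] at hnonneg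
  linarith [lt_of_le_of_ne hnonneg hpos.symm]

section SpecialOrthogonal

variable {R : Matrix (Fin 3) (Fin 3) ℝ}

theorem mul_self_eq_trace_smul_sub_add_transpose (horth : Rᵀ * R = 1) (hdet : R.det = 1) :
    R * R = R.trace • R - R.trace • 1 + Rᵀ := by
  have hadj := adjugate_fin_three_eq_mul_self_sub_trace_smul R
  rw [adjugate_eq_transpose_of_transpose_mul_self_eq_one horth hdet] at hadj
  have htr : (R * R).trace = R.trace ^ 2 - 2 * R.trace := by
    have h := congrArg trace hadj
    simp only [trace_transpose, trace_add, trace_sub, trace_smul, trace_one, smul_eq_mul,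
      Fintype.card_fin, Nat.cast_ofNat] at h
    linarith
  rw [hadj, htr]
  module

theorem sub_transpose_mul_self_eq (horth : Rᵀ * R = 1) (hdet : R.det = 1) :
    (R - Rᵀ) * (R - Rᵀ) = (R.trace + 1) • (R + Rᵀ) - (2 * (R.trace + 1)) • 1 := by
  have hsq := mul_self_eq_trace_smul_sub_add_transpose horth hdet
  have hsqT : Rᵀ * Rᵀ = R.trace • Rᵀ - R.trace • 1 + R := by
    simpa using congrArg transpose hsq
  rw [sub_mul, mul_sub, mul_sub, hsq, hsqT, horth, mul_eq_one_comm.mp horth]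
  module

theorem sub_transpose_mul_self_mul_eq (horth : Rᵀ * R = 1) (hdet : R.det = 1) :
    (R - Rᵀ) * (R - Rᵀ) * (R - Rᵀ) = ((R.trace - 3) * (R.trace + 1)) • (R - Rᵀ) := by
  have hsq := mul_self_eq_trace_smul_sub_add_transpose horth hdet
  have hsqT : Rᵀ * Rᵀ = R.trace • Rᵀ - R.trace • 1 + R := by
    simpa using congrArg transpose hsq
  rw [sub_transpose_mul_self_eq horth hdet, sub_mul, smul_mul_assoc, smul_mul_assoc, add_mul,
    mul_sub, mul_sub, hsq, hsqT, horth, mul_eq_one_comm.mp horth, one_mul]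
  module

theorem trace_add_one_mul_three_sub_trace_nonneg (horth : Rᵀ * R = 1) (hdet : R.det = 1) :
    0 ≤ (R.trace + 1) * (3 - R.trace) := by
  have h := (posSemidef_conjTranspose_mul_self (R - Rᵀ)).trace_nonneg
  rw [conjTranspose_eq_transpose_of_trivial, transpose_sub, transpose_transpose, ← neg_sub,
    neg_mul, trace_neg, sub_transpose_mul_self_eq horth hdet] at h
  simp only [trace_sub, trace_smul, trace_add, trace_transpose, trace_one, smul_eq_mul,
    Fintype.card_fin, Nat.cast_ofNat] at h
  linarith

variable {φ : ℝ}

theorem smul_sub_transpose_cube_eq_neg (horth : Rᵀ * R = 1) (hdet : R.det = 1)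
    (hcos : Real.cos φ = (R.trace - 1) / 2) (hsin : Real.sin φ ≠ 0) :
    let K := (2 * Real.sin φ)⁻¹ • (R - Rᵀ)
    K * K * K = -K := by
  intro K
  have hs2 := Real.four_mul_sin_sq_of_cos_eq hcos
  simp only [K, smul_mul_assoc, mul_smul_comm, smul_smul, sub_transpose_mul_self_mul_eq horth hdet,
    ← neg_smul]
  congr 1
  field_simp
  linear_combination hs2

theorem one_add_sin_smul_add_one_sub_cos_smul_eq (horth : Rᵀ * R = 1) (hdet : R.det = 1)
    (hcos : Real.cos φ = (R.trace - 1) / 2) (hsin : Real.sin φ ≠ 0) :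
    let K := (2 * Real.sin φ)⁻¹ • (R - Rᵀ)
    1 + Real.sin φ • K + (1 - Real.cos φ) • (K * K) = R := by
  intro K
  have hcos' : (1 - Real.cos φ) * (R.trace + 1) = 2 * Real.sin φ ^ 2 := by
    rw [hcos]
    linear_combination -Real.four_mul_sin_sq_of_cos_eq hcos / 2
  simp only [K, smul_mul_assoc, mul_smul_comm, smul_smul, sub_transpose_mul_self_eq horth hdet]
  match_scalars <;> field_simp <;> rw [hcos'] <;> ring

end SpecialOrthogonal

end Matrix

/-- Closed-form log on `SO(3)`: for `R ∈ SO(3)` with `tr R ≠ −1` and `R ≠ I`, setting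
`φ = arccos((tr R − 1)/2) ∈ (0, π)`, the matrix `X = (φ/(2 sin φ))(R − Rᵀ)` is
skew-symmetric and `exp X = R`. -/
theorem stmt18 (R : Matrix (Fin 3) (Fin 3) ℝ)
    (horth : Rᵀ * R = 1) (hdet : R.det = 1)
    (htr : R.trace ≠ -1) (hne : R ≠ 1)
    (φ : ℝ) (hφ : φ = Real.arccos ((R.trace - 1) / 2))
    (X : Matrix (Fin 3) (Fin 3) ℝ)
    (hX : X = (φ / (2 * Real.sin φ)) • (R - Rᵀ)) :
    φ ∈ Set.Ioo 0 Real.pi ∧ Xᵀ = -X ∧ NormedSpace.exp X = R := by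
  have hlt : R.trace < 3 := by
    simpa using trace_lt_card_of_transpose_mul_self_eq_one horth hne
  have hgt : -1 < R.trace := by
    have hge : -1 ≤ R.trace := by nlinarith [trace_add_one_mul_three_sub_trace_nonneg horth hdet]
    exact hge.lt_of_ne htr.symm
  have hφpos : 0 < φ := hφ ▸ Real.arccos_pos.mpr (by linarith)
  have hφlt : φ < Real.pi := hφ ▸ Real.arccos_lt_pi.mpr (by linarith)
  have hcos : Real.cos φ = (R.trace - 1) / 2 := hφ ▸ Real.cos_arccos (by linarith) (by linarith)
  have hsin : Real.sin φ ≠ 0 := (Real.sin_pos_of_pos_of_lt_pi hφpos hφlt).ne'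
  refine ⟨⟨hφpos, hφlt⟩, ?_, ?_⟩
  · rw [hX, transpose_smul, transpose_sub, transpose_transpose, ← smul_neg, neg_sub]
  · rw [hX, div_eq_mul_inv, ← smul_smul,
      exp_smul_of_mul_mul_self_eq_neg (smul_sub_transpose_cube_eq_neg horth hdet hcos hsin)]
    exact one_add_sin_smul_add_one_sub_cos_smul_eq horth hdet hcos hsin
end
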